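/- arXiv:0802.1361 — 2 statements merged into one kernel-verified Lean document; each statement's English description precedes it below -/
import Mathlib

section
/- There exists a family of triangulation graphs of polygons, one for each n ≥ 3, such that every edge 2-dominating set of the graph with n vertices has cardinality at least ⌊(2n+1)/5⌋ (and at least 2 when n = 4). -/
open Finset

/-- Vertices `i` and `j` are consecutive on the Hamiltonian cycle of the `n`-gon. -/
def adjOnCycle (n : ℕ) (i j : Fin n) : Prop :=
  (i.val + 1) % n = j.val ∨ (j.val + 1) % n = i.val

instance (n : ℕ) (i j : Fin n) : Decidable (adjOnCycle n i j) := by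
  unfold adjOnCycle; infer_instance

/-- A boundary edge of the polygon: a pair of consecutive vertices. -/
def isBoundaryEdge (n : ℕ) (e : Finset (Fin n)) : Prop :=
  ∃ i j : Fin n, i ≠ j ∧ adjOnCycle n i j ∧ e = {i, j}

/-- A diagonal pair of the polygon: a pair of distinct non-consecutive vertices. -/
def isDiagPair (n : ℕ) (e : Finset (Fin n)) : Prop :=
  ∃ i j : Fin n, i ≠ j ∧ ¬ adjOnCycle n i j ∧ e = {i, j}

/-- Two chords of the convex `n`-gon cross (interleave strictly). -/
def crossing (n : ℕ) (e f : Finset (Fin n)) : Prop :=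
  ∃ a b c d : Fin n, e = {a, b} ∧ f = {c, d} ∧
    a.val < c.val ∧ c.val < b.val ∧ b.val < d.val

/-- A triangulation graph of a polygon with `n` vertices (a maximal outerplanar
graph): the vertices `Fin n` in convex position together with a maximal
(i.e. of cardinality `n - 3`) set of pairwise noncrossing diagonals. -/
structure PolyTriangulation (n : ℕ) where
  diags : Finset (Finset (Fin n))
  diags_valid : ∀ e ∈ diags, isDiagPair n e
  noncrossing : ∀ e ∈ diags, ∀ f ∈ diags, ¬ crossing n e f
  maximal : diags.card = n - 3

/-- An edge of the triangulation graph: a boundary edge or a diagonal. -/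
def PolyTriangulation.isEdge {n : ℕ} (T : PolyTriangulation n) (e : Finset (Fin n)) : Prop :=
  isBoundaryEdge n e ∨ e ∈ T.diags

/-- A triangular face of a maximal outerplanar graph is the same as a 3-cycle. -/
def PolyTriangulation.isTriangle {n : ℕ} (T : PolyTriangulation n) (t : Finset (Fin n)) : Prop :=
  ∃ a b c : Fin n, a ≠ b ∧ a ≠ c ∧ b ≠ c ∧ t = {a, b, c} ∧
    T.isEdge {a, b} ∧ T.isEdge {a, c} ∧ T.isEdge {b, c}

/-- A vertex is incident to (covered by) the set `D` of edges/diagonals. -/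
def incidentTo {n : ℕ} (D : Finset (Finset (Fin n))) (v : Fin n) : Prop :=
  ∃ e ∈ D, v ∈ e

/-- A (diagonal) 2-dominating set: a set of edges and diagonals of `T` such that
every triangular face has at least two of its vertices incident to the set. -/
def TwoDominating {n : ℕ} (T : PolyTriangulation n) (D : Finset (Finset (Fin n))) : Prop :=
  (∀ e ∈ D, T.isEdge e) ∧
  ∀ t, T.isTriangle t →
    2 ≤ (t.filter (fun v => ∃ e ∈ D, v ∈ e)).card

/-- An edge 2-dominating set: a set of boundary edges of `T` such that
every triangular face has at least two of its vertices incident to the set. -/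
def EdgeTwoDominating {n : ℕ} (T : PolyTriangulation n) (D : Finset (Finset (Fin n))) : Prop :=
  (∀ e ∈ D, isBoundaryEdge n e) ∧
  ∀ t, T.isTriangle t →
    2 ≤ (t.filter (fun v => ∃ e ∈ D, v ∈ e)).card


/-!
Let `k = (n - 2) / 5`. In the triangulation `blockFan n k`, the hub `n - 1` is joined to
`0, 5, …, 5k` and to every vertex after `5k`, and each hexagon `5j, …, 5j + 5` (`j < k`) is cut
by the diagonals `(5j, 5j+4)`, `(5j+1, 5j+3)`, `(5j+1, 5j+4)`, `(5j, 5j+5)`. Number the sides so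
that side `v` joins `v` and `v + 1`.

If a side at the hub is chosen, every hexagon needs two of its own five sides: one side covers
only two consecutive vertices and cannot serve both triangles `(5j+1, 5j+2, 5j+3)` and
`(5j+1, 5j+3, 5j+4)`. If no side at the hub is chosen, every fan triangle must have its two other
vertices covered; then side `0` is chosen, and every window of sides `5j+1, …, 5j+5` contains a
side covering `5j+2` or `5j+3` and a side covering `5j+5`. Either way there are `2k + 1` sides,
and one more near the hub once `n ≥ 5k + 5`; this is `⌊(2n+1)/5⌋`.
-/

open Fin.CommRing

def AtLeastTwo (p q r : Prop) : Prop := (p ∧ q) ∨ (p ∧ r) ∨ (q ∧ r)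

namespace AtLeastTwo

variable {p q r p' q' r' : Prop}

theorem imp (hp : p → p') (hq : q → q') (hr : r → r') (h : AtLeastTwo p q r) :
    AtLeastTwo p' q' r' := by
  unfold AtLeastTwo at *; tauto

theorem left_or_mid (h : AtLeastTwo p q r) : p ∨ q := by unfold AtLeastTwo at h; tauto

theorem mid_or_right (h : AtLeastTwo p q r) : q ∨ r := by unfold AtLeastTwo at h; tauto

theorem of_not_right (h : AtLeastTwo p q r) (hr : ¬ r) : p ∧ q := by
  unfold AtLeastTwo at h; tauto

end AtLeastTwo

theorem atLeastTwo_of_two_le_card_filter {α : Type*} [DecidableEq α] {x y z : α}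
    {p : α → Prop} [DecidablePred p]
    (h : 2 ≤ (({x, y, z} : Finset α).filter p).card) : AtLeastTwo (p x) (p y) (p z) := by
  unfold AtLeastTwo
  by_cases hx : p x <;> by_cases hy : p y <;> by_cases hz : p z <;>
    simp_all [Finset.filter_insert, Finset.filter_singleton]

namespace Nat

variable {p : ℕ → Prop} [DecidablePred p]

theorem count_add_one_le {a u m : ℕ} (hau : a ≤ u) (hum : u < m) (hu : p u) :
    count p a + 1 ≤ count p m :=
  (count_monotone p hau).trans_lt (count_strict_mono hu hum)

theorem count_add_two_le {a u w m : ℕ} (hau : a ≤ u) (huw : u < w) (hwm : w < m)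
    (hu : p u) (hw : p w) : count p a + 2 ≤ count p m :=
  (count_add_one_le hau huw hu).trans_lt (count_strict_mono hw hwm)

theorem two_le_count {u w m : ℕ} (huw : u ≠ w) (hum : u < m) (hwm : w < m)
    (hu : p u) (hw : p w) : 2 ≤ count p m := by
  rcases Nat.lt_or_gt_of_ne huw with h | h
  · exact count_add_two_le (Nat.zero_le u) h hwm hu hw
  · exact count_add_two_le (Nat.zero_le w) h hum hw hu

end Nat

theorem add_mul_le_of_forall_add_le_succ {f : ℕ → ℕ} {a k : ℕ}
    (h : ∀ m < k, f m + a ≤ f (m + 1)) : f 0 + k * a ≤ f k := by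
  induction k with
  | zero => simp
  | succ k ih =>
    have := ih fun m hm => h m (by omega)
    have := h k (by omega)
    rw [Nat.succ_mul]
    omega


section Polygon

variable {n : ℕ} [NeZero n]

theorem natCast_fin_inj {x y : ℕ} (hx : x < n) (hy : y < n) : (x : Fin n) = y ↔ x = y := by
  simp [Fin.ext_iff, Fin.val_cast_of_lt hx, Fin.val_cast_of_lt hy]

theorem natCast_pred_eq_neg_one : ((n - 1 : ℕ) : Fin n) = -1 :=
  eq_neg_of_add_eq_zero_left <| by
    rw [← Nat.cast_add_one, Nat.sub_add_cancel NeZero.one_le, Fin.natCast_self]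

theorem isBoundaryEdge_iff (hn : 1 < n) {e : Finset (Fin n)} :
    isBoundaryEdge n e ↔ ∃ i : Fin n, e = {i, i + 1} := by
  have hsucc (i : Fin n) : ((i + 1 : Fin n) : ℕ) = (i + 1) % n := by simp [Fin.val_add]
  constructor
  · rintro ⟨i, j, -, hij | hji, rfl⟩
    · exact ⟨i, by rw [show j = i + 1 from Fin.ext (by rw [hsucc, hij])]⟩
    · exact ⟨j, by rw [pair_comm, show i = j + 1 from Fin.ext (by rw [hsucc, hji])]⟩
  · rintro ⟨i, rfl⟩
    have h1 : (1 : Fin n) ≠ 0 := by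
      intro h
      simpa [Nat.mod_eq_of_lt hn] using congrArg Fin.val h
    exact ⟨i, i + 1, by simpa using h1.symm, Or.inl (hsucc i).symm, rfl⟩

theorem pair_add_one_injective (hn : 2 < n) :
    Function.Injective fun i : Fin n => ({i, i + 1} : Finset (Fin n)) := by
  intro a b h
  simp only [← coe_inj, coe_pair, Set.pair_eq_pair_iff] at h
  rcases h with ⟨h, -⟩ | ⟨h₁, h₂⟩
  · exact h
  · have h2 : (2 : Fin n) = 0 := by linear_combination h₂ - h₁
    simpa [Nat.mod_eq_of_lt hn] using congrArg Fin.val h2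

def vertexPair (n : ℕ) [NeZero n] (p : ℕ × ℕ) : Finset (Fin n) :=
  {(p.1 : Fin n), (p.2 : Fin n)}

/-- The last disjunct excludes the side `{0, n - 1}`. -/
def IsChord (n : ℕ) (p : ℕ × ℕ) : Prop :=
  p.1 + 2 ≤ p.2 ∧ p.2 < n ∧ (0 < p.1 ∨ p.2 + 1 < n)

def Interleave (p q : ℕ × ℕ) : Prop := p.1 < q.1 ∧ q.1 < p.2 ∧ p.2 < q.2

theorem IsChord.isDiagPair {p : ℕ × ℕ} (h : IsChord n p) : isDiagPair n (vertexPair n p) := by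
  obtain ⟨hp, hp2, hwrap⟩ := h
  refine ⟨p.1, p.2, fun h => by have := (natCast_fin_inj (by omega) hp2).1 h; omega, ?_, rfl⟩
  simp only [adjOnCycle, Fin.val_cast_of_lt hp2, Fin.val_cast_of_lt (show p.1 < n by omega),
    Nat.mod_eq_of_lt (show p.1 + 1 < n by omega)]
  rcases Nat.lt_or_ge (p.2 + 1) n with h | h
  · rw [Nat.mod_eq_of_lt h]; omega
  · rw [show p.2 + 1 = n by omega, Nat.mod_self]; omega

theorem val_eq_of_vertexPair_eq {p : ℕ × ℕ} {a b : Fin n} (h : vertexPair n p = {a, b})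
    (hab : a.val < b.val) (hp : p.1 < p.2) (hp2 : p.2 < n) : a.val = p.1 ∧ b.val = p.2 := by
  rw [vertexPair, ← coe_inj, coe_pair, coe_pair, Set.pair_eq_pair_iff] at h
  rcases h with ⟨rfl, rfl⟩ | ⟨rfl, rfl⟩ <;>
    simp only [Fin.val_cast_of_lt (hp.trans hp2), Fin.val_cast_of_lt hp2, and_self] at hab ⊢
  omega

theorem interleave_of_crossing {p q : ℕ × ℕ} (hp : p.1 < p.2) (hp2 : p.2 < n) (hq : q.1 < q.2)
    (hq2 : q.2 < n) (h : crossing n (vertexPair n p) (vertexPair n q)) : Interleave p q := by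
  obtain ⟨a, b, c, d, hab, hcd, hac, hcb, hbd⟩ := h
  have := val_eq_of_vertexPair_eq hab (hac.trans hcb) hp hp2
  have := val_eq_of_vertexPair_eq hcd (hcb.trans hbd) hq hq2
  exact ⟨by omega, by omega, by omega⟩

theorem vertexPair_injOn : Set.InjOn (vertexPair n) {p | p.1 < p.2 ∧ p.2 < n} := by
  rintro p ⟨hp, hp2⟩ q ⟨hq, hq2⟩ h
  have hq' := Fin.val_cast_of_lt (n := n) (hq.trans hq2)
  have hq2' := Fin.val_cast_of_lt (n := n) hq2
  have := val_eq_of_vertexPair_eq h (by rwa [hq', hq2']) hp hp2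
  rw [hq', hq2'] at this
  exact Prod.ext this.1.symm this.2.symm

def PolyTriangulation.ofChords (P : Finset (ℕ × ℕ)) (hP : ∀ p ∈ P, IsChord n p)
    (hcross : ∀ p ∈ P, ∀ q ∈ P, ¬ Interleave p q)
    (hcard : P.card = n - 3) : PolyTriangulation n where
  diags := P.image (vertexPair n)
  diags_valid := by
    simp only [mem_image]
    rintro _ ⟨p, hp, rfl⟩
    exact (hP p hp).isDiagPair
  noncrossing := by
    simp only [mem_image]
    rintro _ ⟨p, hp, rfl⟩ _ ⟨q, hq, rfl⟩ h
    obtain ⟨hp1, hp2, -⟩ := hP p hp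
    obtain ⟨hq1, hq2, -⟩ := hP q hq
    exact hcross p hp q hq (interleave_of_crossing (by omega) hp2 (by omega) hq2 h)
  maximal := by
    rw [card_image_of_injOn (vertexPair_injOn.mono fun p hp => ?_), hcard]
    obtain ⟨hp1, hp2, -⟩ := hP p hp
    exact ⟨by omega, hp2⟩

theorem PolyTriangulation.isEdge_succ (T : PolyTriangulation n) (hn : 1 < n) (v : ℕ) :
    T.isEdge {(v : Fin n), ((v + 1 : ℕ) : Fin n)} :=
  Or.inl ((isBoundaryEdge_iff hn).2 ⟨v, by push_cast; rfl⟩)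

theorem PolyTriangulation.isEdge_zero_pred (T : PolyTriangulation n) (hn : 1 < n) :
    T.isEdge {((0 : ℕ) : Fin n), ((n - 1 : ℕ) : Fin n)} :=
  Or.inl ((isBoundaryEdge_iff hn).2
    ⟨-1, by rw [natCast_pred_eq_neg_one, Nat.cast_zero, neg_add_cancel, pair_comm]⟩)

theorem EdgeTwoDominating.atLeastTwo {T : PolyTriangulation n} {D : Finset (Finset (Fin n))}
    (hD : EdgeTwoDominating T D) {x y z : ℕ} (hxy : x < y) (hyz : y < z) (hz : z < n)
    (hexy : T.isEdge {(x : Fin n), (y : Fin n)}) (hexz : T.isEdge {(x : Fin n), (z : Fin n)})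
    (heyz : T.isEdge {(y : Fin n), (z : Fin n)}) :
    AtLeastTwo (incidentTo D (x : Fin n)) (incidentTo D (y : Fin n)) (incidentTo D (z : Fin n)) :=
  have ne {a b : ℕ} (hab : a < b) (hb : b < n) : (a : Fin n) ≠ b :=
    fun h => hab.ne ((natCast_fin_inj (hab.trans hb) hb).1 h)
  atLeastTwo_of_two_le_card_filter (p := fun v => ∃ e ∈ D, v ∈ e) <| hD.2 _
    ⟨_, _, _, ne hxy (hyz.trans hz), ne (hxy.trans hyz) hz, ne hyz hz, rfl, hexy, hexz, heyz⟩

def SideIn (D : Finset (Finset (Fin n))) (v : ℕ) : Prop :=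
  ({(v : Fin n), (v : Fin n) + 1} : Finset (Fin n)) ∈ D

instance (D : Finset (Finset (Fin n))) : DecidablePred (SideIn D) := fun _ => by
  unfold SideIn; infer_instance

theorem pair_sub_one_mem_or_pair_add_one_mem {D : Finset (Finset (Fin n))}
    (hD : ∀ e ∈ D, isBoundaryEdge n e) (hn : 1 < n) {w : Fin n} (h : incidentTo D w) :
    {w - 1, w} ∈ D ∨ {w, w + 1} ∈ D := by
  obtain ⟨e, he, hw⟩ := h
  obtain ⟨i, rfl⟩ := (isBoundaryEdge_iff hn).1 (hD e he)
  rcases mem_insert.1 hw with rfl | hw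
  · exact Or.inr he
  · rw [mem_singleton.1 hw, add_sub_cancel_right]
    exact Or.inl he

theorem count_sideIn_le_card (D : Finset (Finset (Fin n))) (hn : 2 < n) :
    Nat.count (SideIn D) n ≤ D.card := by
  rw [Nat.count_eq_card_filter_range]
  refine card_le_card_of_injOn (fun v => {(v : Fin n), (v : Fin n) + 1})
    (fun v hv => (mem_filter.1 hv).2) fun u hu v hv h => ?_
  simp only [coe_filter, mem_range, Set.mem_ofPred_eq] at hu hv
  exact (natCast_fin_inj hu.1 hv.1).1 (pair_add_one_injective hn h)

end Polygon

/-- Each `v ∈ [1, n - 3]` labels one diagonal, which makes the count `n - 3` evident. The labels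
`v ≤ 5k` with `v ≢ 0 (mod 5)` label the diagonals of the hexagon `5j, …, 5j + 5`, `j = v / 5`;
every other label `v` labels the fan diagonal `(v, n - 1)`. -/
def blockFanChord (n k v : ℕ) : ℕ × ℕ :=
  if v % 5 = 0 ∨ 5 * k < v then (v, n - 1)
  else if v % 5 = 1 then (v - 1, v + 3)
  else if v % 5 = 2 then (v - 1, v + 1)
  else if v % 5 = 3 then (v - 2, v + 1)
  else (v - 4, v + 1)

section BlockFan

variable {n k : ℕ}

theorem isChord_blockFanChord (hk : 5 * k + 2 ≤ n) {v : ℕ} (hv : v ∈ Icc 1 (n - 3)) :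
    IsChord n (blockFanChord n k v) := by
  rw [mem_Icc] at hv
  unfold blockFanChord IsChord
  split_ifs <;> dsimp only <;> omega

theorem blockFanChord_not_interleave (hk : 5 * k + 2 ≤ n) {u v : ℕ} (hu : u ∈ Icc 1 (n - 3))
    (hv : v ∈ Icc 1 (n - 3)) :
    ¬ Interleave (blockFanChord n k u) (blockFanChord n k v) := by
  rw [mem_Icc] at hu hv
  unfold Interleave blockFanChord
  split_ifs <;> dsimp only <;> omega

theorem blockFanChord_injOn (hk : 5 * k + 2 ≤ n) :
    Set.InjOn (blockFanChord n k) (Icc 1 (n - 3)) := by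
  intro u hu v hv h
  simp only [coe_Icc, Set.mem_Icc] at hu hv
  unfold blockFanChord at h
  split_ifs at h <;> simp only [Prod.mk.injEq] at h <;> omega

variable [NeZero n]

def blockFan (n k : ℕ) [NeZero n] (hk : 5 * k + 2 ≤ n) : PolyTriangulation n :=
  .ofChords ((Icc 1 (n - 3)).image (blockFanChord n k))
    (forall_mem_image.2 fun _ hv => isChord_blockFanChord hk hv)
    (forall_mem_image.2 fun _ hu => forall_mem_image.2 fun _ hv =>
      blockFanChord_not_interleave hk hu hv)
    (by rw [card_image_of_injOn (blockFanChord_injOn hk), Nat.card_Icc]; omega)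

variable (hk : 5 * k + 2 ≤ n)

theorem blockFan_isEdge_of_label {v a b : ℕ} (hv : v ∈ Icc 1 (n - 3))
    (h : blockFanChord n k v = (a, b)) : (blockFan n k hk).isEdge {(a : Fin n), (b : Fin n)} :=
  Or.inr (mem_image.2 ⟨(a, b), h ▸ mem_image_of_mem _ hv, rfl⟩)

theorem blockFan_isEdge_block {j : ℕ} (hj : j < k) :
    (blockFan n k hk).isEdge {((5 * j + 1 : ℕ) : Fin n), ((5 * j + 3 : ℕ) : Fin n)} ∧
    (blockFan n k hk).isEdge {((5 * j + 1 : ℕ) : Fin n), ((5 * j + 4 : ℕ) : Fin n)} ∧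
    (blockFan n k hk).isEdge {((5 * j : ℕ) : Fin n), ((5 * j + 5 : ℕ) : Fin n)} := by
  refine ⟨blockFan_isEdge_of_label hk (v := 5 * j + 2) ?_ ?_,
    blockFan_isEdge_of_label hk (v := 5 * j + 3) ?_ ?_,
    blockFan_isEdge_of_label hk (v := 5 * j + 4) ?_ ?_⟩ <;>
    first
    | (rw [mem_Icc]; omega)
    | (unfold blockFanChord; split_ifs <;> simp only [Prod.mk.injEq, and_true] <;> omega)

theorem blockFan_isEdge_fan {s : ℕ} (hn : 3 ≤ n) (hs : s ≤ n - 2)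
    (hs' : s % 5 = 0 ∨ 5 * k < s) :
    (blockFan n k hk).isEdge {(s : Fin n), ((n - 1 : ℕ) : Fin n)} := by
  rcases Nat.eq_zero_or_pos s with rfl | hs₀
  · exact PolyTriangulation.isEdge_zero_pred _ (by omega)
  rcases Nat.lt_or_ge s (n - 2) with hs₂ | hs₂
  · exact blockFan_isEdge_of_label hk (mem_Icc.2 ⟨hs₀, by omega⟩) (if_pos hs')
  · have := (blockFan n k hk).isEdge_succ (by omega) s
    rwa [show s + 1 = n - 1 by omega] at this

end BlockFan
/-- A single chosen side covers at most two consecutive vertices, and no two consecutive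
vertices among `1, …, 4` meet both triangles `{1, 2, 3}` and `{1, 3, 4}` twice. -/
theorem two_le_count_of_block (x : ℕ → Prop) [DecidablePred x]
    (h₁ : AtLeastTwo (x 0 ∨ x 1) (x 1 ∨ x 2) (x 2 ∨ x 3))
    (h₂ : AtLeastTwo (x 0 ∨ x 1) (x 2 ∨ x 3) (x 3 ∨ x 4)) : 2 ≤ Nat.count x 5 := by
  simp only [Nat.count_succ, Nat.count_zero]
  unfold AtLeastTwo at h₁ h₂
  by_cases x 0 <;> by_cases x 1 <;> by_cases x 2 <;> by_cases x 3 <;> by_cases x 4 <;>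
    simp_all

/-- The constraints that an edge 2-dominating set of `blockFan n k` puts on the predicates
`e v` (side `v` is chosen) and `c v` (vertex `v` is covered): the sides covering a vertex, and the
triangles of `blockFan n k` that the counting uses. -/
structure BlockFanCover (n k : ℕ) (e c : ℕ → Prop) : Prop where
  covered_succ : ∀ v, c (v + 1) → e v ∨ e (v + 1)
  covered_zero : c 0 → e 0 ∨ e (n - 1)
  block_low : ∀ j < k, AtLeastTwo (c (5 * j + 1)) (c (5 * j + 2)) (c (5 * j + 3))
  block_high : ∀ j < k, AtLeastTwo (c (5 * j + 1)) (c (5 * j + 3)) (c (5 * j + 4))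
  fan_block : ∀ j < k, AtLeastTwo (c (5 * j)) (c (5 * j + 5)) (c (n - 1))
  fan_tail : ∀ v, 5 * k ≤ v → v + 3 ≤ n → AtLeastTwo (c v) (c (v + 1)) (c (n - 1))

namespace BlockFanCover

variable {n k : ℕ} {e c : ℕ → Prop} [DecidablePred e]

theorem le_count_of_hub_side (h : BlockFanCover n k e c) (hk : 5 * k + 2 ≤ n)
    (hk' : n ≤ 5 * k + 6) (hub : e (n - 2) ∨ e (n - 1)) :
    (2 * n + 1) / 5 ≤ Nat.count e n := by
  have hblocks : 2 * k ≤ Nat.count e (5 * k) := by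
    have := add_mul_le_of_forall_add_le_succ (f := fun m => Nat.count e (5 * m)) (a := 2)
      fun m hm => by
        have := two_le_count_of_block (fun i => e (5 * m + i))
          ((h.block_low m hm).imp (h.covered_succ _) (h.covered_succ _) (h.covered_succ _))
          ((h.block_high m hm).imp (h.covered_succ _) (h.covered_succ _) (h.covered_succ _))
        rw [show 5 * (m + 1) = 5 * m + 5 by ring, Nat.count_add]
        omega
    simpa [mul_comm] using this
  obtain ⟨w, hw, hnw⟩ : ∃ w, e w ∧ n - 2 ≤ w ∧ w < n := by
    rcases hub with hw | hw
    · exact ⟨_, hw, le_rfl, by omega⟩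
    · exact ⟨_, hw, by omega, by omega⟩
  by_cases hn : 5 * k + 5 ≤ n
  · obtain ⟨u, hu, hku⟩ : ∃ u, e u ∧ 5 * k ≤ u ∧ u ≤ 5 * k + 2 := by
      rcases (h.fan_tail (5 * k + 1) (by omega) (by omega)).left_or_mid with hc | hc <;>
        rcases h.covered_succ _ hc with hu | hu <;> exact ⟨_, hu, by omega, by omega⟩
    have := Nat.count_add_two_le hku.1 (by omega) hnw.2 hu hw
    omega
  · have := Nat.count_add_one_le (show 5 * k ≤ w by omega) hnw.2 hw
    omega

theorem le_count_of_no_hub_side (h : BlockFanCover n k e c) (hn : 3 ≤ n) (hk : 5 * k + 2 ≤ n)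
    (hk' : n ≤ 5 * k + 6) (hub : ¬ (e (n - 2) ∨ e (n - 1))) :
    (2 * n + 1) / 5 ≤ Nat.count e n := by
  have hc : ¬ c (n - 1) := by
    have := h.covered_succ (n - 2)
    rw [show n - 2 + 1 = n - 1 by omega] at this
    exact fun hc => hub (this hc)
  have h0 : e 0 := by
    have : c 0 := by
      rcases Nat.eq_zero_or_pos k with hk0 | hk0
      · exact ((h.fan_tail 0 (by omega) (by omega)).of_not_right hc).1
      · exact ((h.fan_block 0 hk0).of_not_right hc).1
    exact (h.covered_zero this).resolve_right fun h' => hub (Or.inr h')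
  have hblocks : 1 + k * 2 ≤ Nat.count e (5 * k + 1) := by
    have := add_mul_le_of_forall_add_le_succ (f := fun m => Nat.count e (5 * m + 1)) (a := 2)
      fun m hm => by
        obtain ⟨u, hu, hmu⟩ : ∃ u, e u ∧ 5 * m + 1 ≤ u ∧ u ≤ 5 * m + 3 := by
          rcases (h.block_low m hm).mid_or_right with hc | hc <;>
            rcases h.covered_succ _ hc with hu | hu <;> exact ⟨_, hu, by omega, by omega⟩
        obtain ⟨w, hw, hmw⟩ : ∃ w, e w ∧ 5 * m + 4 ≤ w ∧ w ≤ 5 * m + 5 := by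
          rcases h.covered_succ (5 * m + 4) ((h.fan_block m hm).of_not_right hc).2
            with hw | hw <;> exact ⟨_, hw, by omega, by omega⟩
        exact Nat.count_add_two_le hmu.1 (by omega) (by omega) hu hw
    simpa [Nat.count_succ, h0] using this
  by_cases hn : 5 * k + 5 ≤ n
  · have hlast : e (n - 3) := by
      have := h.covered_succ (n - 3) ((h.fan_tail (n - 3) (by omega) (by omega)).of_not_right hc).2
      rw [show n - 3 + 1 = n - 2 by omega] at this
      exact this.resolve_right fun h' => hub (Or.inl h')
    have := Nat.count_add_one_le (a := 5 * k + 1) (m := n) (by omega) (by omega) hlast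
    omega
  · have := Nat.count_monotone e (show 5 * k + 1 ≤ n by omega)
    omega

theorem le_count (h : BlockFanCover n k e c) (hn : 3 ≤ n) (hk : 5 * k + 2 ≤ n)
    (hk' : n ≤ 5 * k + 6) :
    (2 * n + 1) / 5 ≤ Nat.count e n := by
  by_cases hub : e (n - 2) ∨ e (n - 1)
  · exact h.le_count_of_hub_side hk hk' hub
  · exact h.le_count_of_no_hub_side hn hk hk' hub

theorem two_le_count_of_four (h : BlockFanCover 4 0 e c) : 2 ≤ Nat.count e 4 := by
  have t₀ := h.fan_tail 0 le_rfl (by omega)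
  have t₁ := h.fan_tail 1 (by omega) (by omega)
  by_cases hub : e 2 ∨ e 3
  · rcases hub with h2 | h3
    · rcases t₀.left_or_mid with hc | hc
      · rcases h.covered_zero hc with h' | h'
        · exact Nat.two_le_count (u := 0) (w := 2) (by omega) (by omega) (by omega) h' h2
        · exact Nat.two_le_count (u := 3) (w := 2) (by omega) (by omega) (by omega) h' h2
      · rcases h.covered_succ 0 hc with h' | h'
        · exact Nat.two_le_count (u := 0) (w := 2) (by omega) (by omega) (by omega) h' h2
        · exact Nat.two_le_count (u := 1) (w := 2) (by omega) (by omega) (by omega) h' h2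
    · rcases t₁.left_or_mid with hc | hc <;> rcases h.covered_succ _ hc with h' | h'
      · exact Nat.two_le_count (u := 0) (w := 3) (by omega) (by omega) (by omega) h' h3
      · exact Nat.two_le_count (u := 1) (w := 3) (by omega) (by omega) (by omega) h' h3
      · exact Nat.two_le_count (u := 1) (w := 3) (by omega) (by omega) (by omega) h' h3
      · exact Nat.two_le_count (u := 2) (w := 3) (by omega) (by omega) (by omega) h' h3
  · have hc : ¬ c 3 := fun hc => hub (h.covered_succ 2 hc)
    have h0 : e 0 :=
      (h.covered_zero (t₀.of_not_right hc).1).resolve_right fun h' => hub (Or.inr h')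
    have h1 : e 1 :=
      (h.covered_succ 1 (t₁.of_not_right hc).2).resolve_right fun h' => hub (Or.inl h')
    exact Nat.two_le_count (u := 0) (w := 1) (by omega) (by omega) (by omega) h0 h1

end BlockFanCover

theorem EdgeTwoDominating.blockFanCover {n k : ℕ} [NeZero n] {D : Finset (Finset (Fin n))}
    (hn : 3 ≤ n) (hk : 5 * k + 2 ≤ n) (hD : EdgeTwoDominating (blockFan n k hk) D) :
    BlockFanCover n k (SideIn D) fun v => incidentTo D (v : Fin n) where
  covered_succ v hv := by
    simpa only [SideIn, Nat.cast_add_one, add_sub_cancel_right] using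
      pair_sub_one_mem_or_pair_add_one_mem hD.1 (by omega) hv
  covered_zero h := by
    rw [or_comm]
    simpa only [SideIn, Nat.cast_zero, zero_sub, zero_add, natCast_pred_eq_neg_one,
      neg_add_cancel] using pair_sub_one_mem_or_pair_add_one_mem hD.1 (by omega) h
  block_low j hj := hD.atLeastTwo (by omega) (by omega) (by omega)
    ((blockFan n k hk).isEdge_succ (by omega) _) (blockFan_isEdge_block hk hj).1
    ((blockFan n k hk).isEdge_succ (by omega) _)
  block_high j hj := hD.atLeastTwo (by omega) (by omega) (by omega)
    (blockFan_isEdge_block hk hj).1 (blockFan_isEdge_block hk hj).2.1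
    ((blockFan n k hk).isEdge_succ (by omega) _)
  fan_block j hj := hD.atLeastTwo (by omega) (by omega) (by omega)
    (blockFan_isEdge_block hk hj).2.2 (blockFan_isEdge_fan hk hn (by omega) (by omega))
    (blockFan_isEdge_fan hk hn (by omega) (by omega))
  fan_tail v hv hvn := hD.atLeastTwo (by omega) (by omega) (by omega)
    ((blockFan n k hk).isEdge_succ (by omega) _) (blockFan_isEdge_fan hk hn (by omega) (by omega))
    (blockFan_isEdge_fan hk hn (by omega) (by omega))

/-- for each `n ≥ 3` there is a triangulation graph on `n` vertices
each of whose edge 2-dominating sets has cardinality at least `⌊(2n+1)/5⌋`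
(and at least `2` when `n = 4`). -/
theorem edge_two_dominating_lower_bound (n : ℕ) (hn : 3 ≤ n) :
    ∃ T : PolyTriangulation n,
      ∀ D : Finset (Finset (Fin n)), EdgeTwoDominating T D →
        (2 * n + 1) / 5 ≤ D.card ∧ (n = 4 → 2 ≤ D.card) := by
  have : NeZero n := ⟨by omega⟩
  have hk : 5 * ((n - 2) / 5) + 2 ≤ n := by omega
  refine ⟨blockFan n ((n - 2) / 5) hk, fun D hD => ?_⟩
  have hcover := hD.blockFanCover hn hk
  have hcard := count_sideIn_le_card D (by omega)
  refine ⟨(hcover.le_count hn hk (by omega)).trans hcard, fun h4 => ?_⟩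
  subst h4
  exact hcover.two_le_count_of_four.trans hcard
end

section
/- If a set D of boundary edges of a triangulation graph on n vertices has the property that every triangular face has at least two vertices incident to D, then no two consecutive vertices of the Hamiltonian cycle can both be non-incident to D; in particular |D| ≥ ⌈n/4⌉ − O(1), and specifically for the 7-cycle case |D| ≥ 2. -/
open Finset

/-! A noncrossing family of diagonals of an `n`-gon has at most `n - 3` members, so the `n - 3`
diagonals of `T` form a maximal such family and every pair crossing none of them is an edge.
Hence every edge `{c, d}` with `d ≥ c + 2` has an apex `k`, with `{c, k}` and `{k, d}` edges, and
descending from the outer side `{0, n - 1}` through apexes reaches a triangle on any given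
boundary edge. If neither end of a
boundary edge were incident to `D`, that triangle would have at most one vertex incident to `D`.
For `n = 7`: each of `{0, 1}, {2, 3}, {4, 5}` contains a vertex incident to `D`, while `D`
covers at most `2 |D|` vertices. -/

theorem pair_eq_pair_of_lt {α : Type*} [LinearOrder α] {a b c d : α}
    (h : ({a, b} : Finset α) = {c, d}) (hab : a < b) (hcd : c < d) : a = c ∧ b = d := by
  have h' : ({a, b} : Set α) = {c, d} := by rw [← coe_pair, ← coe_pair, h]
  rcases Set.pair_eq_pair_iff.mp h' with h'' | ⟨rfl, rfl⟩
  · exact h''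
  · exact absurd hab hcd.not_gt

theorem exists_pair_iff_of_lt {α : Type*} [LinearOrder α] {R : α → α → Prop}
    (hR : ∀ i j, R i j → R j i) {a b : α} (hab : a < b) :
    (∃ i j, i ≠ j ∧ R i j ∧ ({a, b} : Finset α) = {i, j}) ↔ R a b := by
  refine ⟨fun ⟨i, j, hij, hR', h⟩ => ?_, fun h => ⟨a, b, hab.ne, h, rfl⟩⟩
  rcases hij.lt_or_gt with hij | hji
  · obtain ⟨rfl, rfl⟩ := pair_eq_pair_of_lt h hab hij
    exact hR'
  · obtain ⟨rfl, rfl⟩ := pair_eq_pair_of_lt (h.trans (pair_comm i j)) hab hji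
    exact hR _ _ hR'

theorem adjOnCycle_symm (n : ℕ) (i j : Fin n) : adjOnCycle n i j → adjOnCycle n j i :=
  Or.symm

theorem adjOnCycle_iff_of_lt {n : ℕ} {i j : Fin n} (hij : i < j) :
    adjOnCycle n i j ↔ j.val = i.val + 1 ∨ (i.val = 0 ∧ j.val = n - 1) := by
  unfold adjOnCycle
  rw [Nat.mod_eq_of_lt (show i.val + 1 < n by omega)]
  rcases (Nat.succ_le_of_lt j.isLt).lt_or_eq with hj | hj
  · rw [Nat.mod_eq_of_lt hj]; omega
  · rw [show j.val + 1 = n from hj, Nat.mod_self]; omega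

theorem isBoundaryEdge_pair_iff {n : ℕ} {i j : Fin n} (hij : i < j) :
    isBoundaryEdge n {i, j} ↔ adjOnCycle n i j :=
  exists_pair_iff_of_lt (adjOnCycle_symm n) hij

theorem isDiagPair_pair_iff {n : ℕ} {i j : Fin n} (hij : i < j) :
    isDiagPair n {i, j} ↔ ¬ adjOnCycle n i j :=
  exists_pair_iff_of_lt (fun i j h h' => h (adjOnCycle_symm n j i h')) hij

theorem isDiagPair.exists_lt {n : ℕ} {e : Finset (Fin n)} (he : isDiagPair n e) :
    ∃ i j, i < j ∧ e = {i, j} := by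
  obtain ⟨i, j, hij, -, rfl⟩ := he
  rcases hij.lt_or_gt with hij | hji
  · exact ⟨i, j, hij, rfl⟩
  · exact ⟨j, i, hji, pair_comm i j⟩

theorem crossing_pair_iff {n : ℕ} {a b c d : Fin n} (hab : a < b) (hcd : c < d) :
    crossing n {a, b} {c, d} ↔ a < c ∧ c < b ∧ b < d := by
  refine ⟨fun ⟨a', b', c', d', he, hf, hac, hcb, hbd⟩ => ?_, fun ⟨hac, hcb, hbd⟩ =>
    ⟨a, b, c, d, rfl, rfl, hac, hcb, hbd⟩⟩
  obtain ⟨rfl, rfl⟩ := pair_eq_pair_of_lt he hab (by omega)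
  obtain ⟨rfl, rfl⟩ := pair_eq_pair_of_lt hf hcd (by omega)
  exact ⟨hac, hcb, hbd⟩

theorem card_le_of_pairwise_not_interleaved (P : Finset (ℕ × ℕ)) (m : ℕ)
    (hP : ∀ p ∈ P, p.1 + 2 ≤ p.2 ∧ p.2 ≤ m)
    (hX : ∀ p ∈ P, ∀ q ∈ P, ¬ (p.1 < q.1 ∧ q.1 < p.2 ∧ p.2 < q.2)) :
    P.card ≤ m - 1 := by
  -- Send `(a, b)` to the largest `x < b` such that `x = a + 1` or `(a, x) ∈ P`; the image lies
  -- in `(0, m)`, and non-interleaving makes this map injective.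
  have hchild : ∀ p ∈ P, ∃ x, p.1 < x ∧ x < p.2 ∧ (x = p.1 + 1 ∨ (p.1, x) ∈ P) ∧
      ∀ c, (p.1, c) ∈ P → c < p.2 → c ≤ x := by
    intro p hp
    let S := (Finset.Ioo p.1 p.2).filter (fun x => x = p.1 + 1 ∨ (p.1, x) ∈ P)
    have hS : p.1 + 1 ∈ S :=
      mem_filter.mpr ⟨mem_Ioo.mpr ⟨by omega, by have := hP p hp; omega⟩, Or.inl rfl⟩
    obtain ⟨x, hxS, hmax⟩ := S.exists_max_image id ⟨_, hS⟩
    simp only [S, mem_filter, mem_Ioo] at hxS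
    refine ⟨x, hxS.1.1, hxS.1.2, hxS.2, fun c hc hcb => hmax c ?_⟩
    simp only [S, mem_filter, mem_Ioo]
    exact ⟨⟨by have := hP _ hc; omega, hcb⟩, Or.inr hc⟩
  choose! φ hφ using hchild
  have hsame : ∀ p ∈ P, ∀ q ∈ P, φ p = φ q → ¬ p.1 < q.1 ∧ ¬ (p.1 = q.1 ∧ p.2 < q.2) := by
    intro p hp q hq hpq
    obtain ⟨hp1, hp2, hpc, -⟩ := hφ p hp
    obtain ⟨hq1, hq2, -, hqmax⟩ := hφ q hq
    constructor
    · intro hlt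
      have hchild : (p.1, φ p) ∈ P := hpc.resolve_left (by omega)
      exact hX _ hchild q hq ⟨hlt, by omega, by omega⟩
    · rintro ⟨heq, hlt⟩
      have := hqmax p.2 (by rw [← heq]; exact hp) hlt
      omega
  calc P.card ≤ (Finset.Ioo 0 m).card := by
        refine card_le_card_of_injOn φ (fun p hp => ?_) (fun p hp q hq hpq => ?_)
        · have := hφ p hp; have := hP p hp
          simp only [coe_Ioo, Set.mem_Ioo]; omega
        · have := hsame p hp q hq hpq; have := hsame q hq p hp hpq.symm
          exact Prod.ext (by omega) (by omega)
    _ = m - 1 := by simp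

theorem card_le_of_pairwise_not_crossing {n : ℕ} (E : Finset (Finset (Fin n)))
    (hE : ∀ e ∈ E, isDiagPair n e) (hX : ∀ e ∈ E, ∀ f ∈ E, ¬ crossing n e f) :
    E.card ≤ n - 3 := by
  classical
  rcases E.eq_empty_or_nonempty with rfl | ⟨e₀, he₀⟩
  · simp
  have hn : 3 ≤ n := by
    obtain ⟨i, j, hij, rfl⟩ := (hE e₀ he₀).exists_lt
    have := (isDiagPair_pair_iff hij).mp (hE _ he₀)
    rw [adjOnCycle_iff_of_lt hij] at this
    omega
  let P := (univ : Finset (Fin n × Fin n)).filter (fun p => p.1 < p.2 ∧ {p.1, p.2} ∈ E)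
  have hP : ∀ p ∈ P, p.1 < p.2 ∧ p.1.val + 2 ≤ p.2.val ∧ ¬ (p.1.val = 0 ∧ p.2.val = n - 1) ∧
      {p.1, p.2} ∈ E := by
    intro p hp
    simp only [P, mem_filter, mem_univ, true_and] at hp
    have := (isDiagPair_pair_iff hp.1).mp (hE _ hp.2)
    rw [adjOnCycle_iff_of_lt hp.1] at this
    exact ⟨hp.1, by omega, by omega, hp.2⟩
  have hEP : E.card ≤ P.card := by
    refine card_le_card_of_surjOn (fun p => {p.1, p.2}) (fun e he => ?_)
    obtain ⟨i, j, hij, rfl⟩ := (hE e he).exists_lt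
    exact ⟨(i, j), by simpa [P, hij] using he, rfl⟩
  -- The outer side `(0, n - 1)` interleaves with nothing; adding it sharpens `n - 2` to `n - 3`.
  let Q := insert (0, n - 1) (P.image fun p => (p.1.val, p.2.val))
  have hQ : Q.card = P.card + 1 := by
    rw [card_insert_of_notMem, card_image_of_injective]
    · exact fun p q h => Prod.ext (Fin.ext (congrArg Prod.fst h)) (Fin.ext (congrArg Prod.snd h))
    · simp only [mem_image, Prod.mk.injEq, not_exists, not_and]
      intro p hp h0 h1
      exact (hP p hp).2.2.1 ⟨h0, h1⟩
  have hQbound := card_le_of_pairwise_not_interleaved Q (n - 1) (by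
      simp only [Q, forall_mem_insert, forall_mem_image]
      exact ⟨by omega, fun p hp => by have := hP p hp; omega⟩) (by
      simp only [Q, forall_mem_insert, forall_mem_image]
      refine ⟨⟨by omega, fun p hp => by omega⟩, fun p hp => ⟨by omega, fun q hq hpq => ?_⟩⟩
      obtain ⟨hp₁, -, -, hpE⟩ := hP p hp
      obtain ⟨hq₁, -, -, hqE⟩ := hP q hq
      exact hX _ hpE _ hqE ((crossing_pair_iff hp₁ hq₁).mpr ⟨hpq.1, hpq.2.1, hpq.2.2⟩))
  omega

namespace PolyTriangulation

variable {n : ℕ} (T : PolyTriangulation n)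

theorem not_crossing_of_isEdge {e f : Finset (Fin n)} (he : T.isEdge e) (hf : T.isEdge f) :
    ¬ crossing n e f := by
  rintro ⟨a, b, c, d, rfl, rfl, hac, hcb, hbd⟩
  rcases he with he | he
  · rw [isBoundaryEdge_pair_iff (hac.trans hcb), adjOnCycle_iff_of_lt (hac.trans hcb)] at he
    omega
  rcases hf with hf | hf
  · rw [isBoundaryEdge_pair_iff (hcb.trans hbd), adjOnCycle_iff_of_lt (hcb.trans hbd)] at hf
    omega
  exact T.noncrossing _ he _ hf ⟨a, b, c, d, rfl, rfl, hac, hcb, hbd⟩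

theorem isEdge_of_not_crossing {i j : Fin n} (hij : i < j)
    (h : ∀ e ∈ T.diags, ¬ crossing n e {i, j} ∧ ¬ crossing n {i, j} e) : T.isEdge {i, j} := by
  classical
  by_cases hadj : adjOnCycle n i j
  · exact Or.inl ((isBoundaryEdge_pair_iff hij).mpr hadj)
  refine Or.inr (by_contra fun hnot => ?_)
  -- Otherwise `{i, j}` could be added to the `n - 3` diagonals of `T`.
  have hcard := card_le_of_pairwise_not_crossing (insert {i, j} T.diags) (by
      simp only [forall_mem_insert]
      exact ⟨(isDiagPair_pair_iff hij).mpr hadj, T.diags_valid⟩) (by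
      simp only [forall_mem_insert]
      refine ⟨⟨fun hc => ?_, fun f hf => (h f hf).2⟩, fun e he => ⟨(h e he).1, T.noncrossing e he⟩⟩
      rw [crossing_pair_iff hij hij] at hc
      exact lt_asymm hc.1 hc.1)
  rw [card_insert_of_notMem hnot, T.maximal] at hcard
  omega

theorem exists_apex {c d : Fin n} (hcd : c.val + 2 ≤ d.val) (h : T.isEdge {c, d}) :
    ∃ k, c < k ∧ k < d ∧ T.isEdge {c, k} ∧ T.isEdge {k, d} := by
  classical
  let K := (univ : Finset (Fin n)).filter (fun k => c < k ∧ k < d ∧ T.isEdge {c, k})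
  have hsucc : (⟨c.val + 1, by omega⟩ : Fin n) ∈ K := by
    have hlt : c < ⟨c.val + 1, by omega⟩ := Fin.lt_def.mpr (Nat.lt_succ_self _)
    refine mem_filter.mpr ⟨mem_univ _, hlt, Fin.lt_def.mpr (by simp only; omega), Or.inl ?_⟩
    rw [isBoundaryEdge_pair_iff hlt, adjOnCycle_iff_of_lt hlt]
    exact Or.inl rfl
  -- The apex is the last neighbour `k` of `c` before `d`: a diagonal crossing `{k, d}` would
  -- cross `{c, d}` or `{c, k}`, or be a later such neighbour.
  obtain ⟨k, hkK, hmax⟩ := K.exists_max_image id ⟨_, hsucc⟩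
  obtain ⟨-, hck, hkd, hck'⟩ := mem_filter.mp hkK
  have hcd' : c < d := hck.trans hkd
  refine ⟨k, hck, hkd, hck', T.isEdge_of_not_crossing hkd fun e he => ?_⟩
  obtain ⟨a, b, hab, rfl⟩ := (T.diags_valid e he).exists_lt
  constructor
  · rw [crossing_pair_iff hab hkd]
    rintro ⟨hak, hkb, hbd⟩
    rcases lt_trichotomy a c with hac | rfl | hca
    · exact T.not_crossing_of_isEdge (Or.inr he) h
        ((crossing_pair_iff hab hcd').mpr ⟨hac, hck.trans hkb, hbd⟩)
    · have := hmax b (mem_filter.mpr ⟨mem_univ _, hab, hbd, Or.inr he⟩)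
      exact absurd this (not_le.mpr hkb)
    · exact T.not_crossing_of_isEdge hck' (Or.inr he)
        ((crossing_pair_iff hck hab).mpr ⟨hca, hak, hkb⟩)
  · rw [crossing_pair_iff hkd hab]
    rintro ⟨hka, had, hdb⟩
    exact T.not_crossing_of_isEdge h (Or.inr he)
      ((crossing_pair_iff hcd' hab).mpr ⟨hck.trans hka, had, hdb⟩)

theorem exists_triangle_of_le_of_le {i j c d : Fin n} (hij : j.val = i.val + 1)
    (hcd : c.val + 2 ≤ d.val) (h : T.isEdge {c, d}) (hci : c ≤ i) (hjd : j ≤ d) :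
    ∃ k, T.isTriangle {k, i, j} := by
  have hij' : i < j := Fin.lt_def.mpr (by omega)
  have hedge : T.isEdge {i, j} :=
    Or.inl ((isBoundaryEdge_pair_iff hij').mpr ((adjOnCycle_iff_of_lt hij').mpr (Or.inl hij)))
  induction hm : d.val - c.val using Nat.strong_induction_on generalizing c d with
  | _ m ih =>
  obtain ⟨k, hck, hkd, hck', hkd'⟩ := T.exists_apex hcd h
  rcases lt_or_ge i k with hik | hki
  · by_cases hbase : c = i ∧ k = j
    · obtain ⟨rfl, rfl⟩ := hbase
      refine ⟨d, d, c, k, ?_, ?_, hij'.ne, rfl, ?_, ?_, hedge⟩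
      all_goals first | omega | rwa [pair_comm]
    · exact ih (k.val - c.val) (by omega) (by omega) hck' hci (by omega) rfl
  · by_cases hbase : k = i ∧ d = j
    · obtain ⟨rfl, rfl⟩ := hbase
      exact ⟨c, c, k, d, by omega, by omega, hij'.ne, rfl, hck', h, hedge⟩
    · exact ih (d.val - k.val) (by omega) (by omega) hkd' (by omega) hjd rfl

theorem exists_triangle_of_consecutive (hn : 3 ≤ n) {i j : Fin n} (hij : (i.val + 1) % n = j.val) :
    ∃ k, T.isTriangle {k, i, j} := by
  let first : Fin n := ⟨0, by omega⟩
  let last : Fin n := ⟨n - 1, by omega⟩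
  have hfl : first < last := Fin.lt_def.mpr (by simp only [first, last]; omega)
  have houter : T.isEdge {first, last} :=
    Or.inl ((isBoundaryEdge_pair_iff hfl).mpr ((adjOnCycle_iff_of_lt hfl).mpr (Or.inr ⟨rfl, rfl⟩)))
  rcases Nat.lt_or_ge (i.val + 1) n with hi | hi
  · rw [Nat.mod_eq_of_lt hi] at hij
    exact T.exists_triangle_of_le_of_le hij.symm (by simp only [first, last]; omega) houter
      (Fin.le_def.mpr (Nat.zero_le _)) (Fin.le_def.mpr (by simp only [last]; omega))
  · rw [show i.val + 1 = n by omega, Nat.mod_self] at hij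
    rw [show i = last from Fin.ext (by simp only [last]; omega),
      show j = first from Fin.ext hij.symm]
    obtain ⟨k, hk₁, hk₂, hk₁', hk₂'⟩ := T.exists_apex (by simp only [first, last]; omega) houter
    refine ⟨k, k, last, first, by omega, by omega, hfl.ne', rfl, hk₂', ?_, ?_⟩
    all_goals rwa [pair_comm]

end PolyTriangulation

theorem EdgeTwoDominating.incidentTo_or_incidentTo {n : ℕ} {T : PolyTriangulation n}
    {D : Finset (Finset (Fin n))} (hD : EdgeTwoDominating T D) {k i j : Fin n}
    (ht : T.isTriangle {k, i, j}) : incidentTo D i ∨ incidentTo D j := by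
  classical
  by_contra hij
  rw [not_or] at hij
  have hsub : ({k, i, j} : Finset (Fin n)).filter (fun v => ∃ e ∈ D, v ∈ e) ⊆ {k} := by
    intro v hv
    simp only [mem_filter, mem_insert, mem_singleton] at hv ⊢
    rcases hv with ⟨rfl | rfl | rfl, hv⟩
    · rfl
    · exact absurd hv hij.1
    · exact absurd hv hij.2
  have := (hD.2 _ ht).trans (card_le_card hsub)
  simp at this

theorem div_two_le_two_mul_card {n : ℕ} {D : Finset (Finset (Fin n))} (hD : ∀ e ∈ D, e.card ≤ 2)
    (hcover : ∀ i j : Fin n, (i.val + 1) % n = j.val → incidentTo D i ∨ incidentTo D j) :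
    n / 2 ≤ 2 * D.card := by
  classical
  have hpairs : range (n / 2) ⊆ (D.biUnion id).image (fun v => v.val / 2) := by
    intro m hm
    rw [mem_range] at hm
    have := hcover ⟨2 * m, by omega⟩ ⟨2 * m + 1, by omega⟩
      (show (2 * m + 1) % n = 2 * m + 1 from Nat.mod_eq_of_lt (by omega))
    simp only [mem_image, mem_biUnion, id]
    rcases this with ⟨e, he, hv⟩ | ⟨e, he, hv⟩
    · exact ⟨_, ⟨e, he, hv⟩, by simp only; omega⟩
    · exact ⟨_, ⟨e, he, hv⟩, by simp only; omega⟩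
  calc n / 2 = (range (n / 2)).card := (card_range _).symm
    _ ≤ (D.biUnion id).card := (card_le_card hpairs).trans card_image_le
    _ ≤ ∑ e ∈ D, e.card := card_biUnion_le
    _ ≤ D.card • 2 := sum_le_card_nsmul _ _ _ hD
    _ = 2 * D.card := by rw [smul_eq_mul, mul_comm]

/-- if `D` is an edge 2-dominating set of a triangulation graph on
`n` vertices, then no two consecutive vertices of the Hamiltonian cycle are
both non-incident to `D`; in particular, in the case `n = 7`, `|D| ≥ 2`. -/
theorem no_two_consecutive_uncovered (n : ℕ) (hn : 3 ≤ n) (T : PolyTriangulation n)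
    (D : Finset (Finset (Fin n))) (hD : EdgeTwoDominating T D) :
    (∀ i j : Fin n, (i.val + 1) % n = j.val → incidentTo D i ∨ incidentTo D j) ∧
    (n = 7 → 2 ≤ D.card) := by
  have hcover : ∀ i j : Fin n, (i.val + 1) % n = j.val → incidentTo D i ∨ incidentTo D j := by
    intro i j hij
    obtain ⟨k, hk⟩ := T.exists_triangle_of_consecutive hn hij
    exact hD.incidentTo_or_incidentTo hk
  refine ⟨hcover, fun h7 => ?_⟩
  have hcard : ∀ e ∈ D, e.card ≤ 2 := fun e he => by
    obtain ⟨i, j, -, -, rfl⟩ := hD.1 e he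
    exact card_le_two
  have := div_two_le_two_mul_card hcard hcover
  omega
end
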